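/- arXiv:2510.18062 — 3 statements merged into one kernel-verified Lean document; each statement's English description precedes it below -/
import Mathlib

section
/- Let p : ℕ × [0,1] → [0,1] be a perceived pivotality model, and suppose for all m ≥ 0 the limit as n → ∞ of p(n,m) is 0 (strong vanishing pivotality). Let g_N(c) = p(n(c,N), m(c)) with n(c,N) = (s_A(c)+s_B(c))·N and s_A(0)+s_B(0) > 0. Then for every δ > 0, any sequence (c_N) of equilibria (g_N(c_N) = c_N) satisfies c_N < δ for all sufficiently large N; i.e., every equilibrium sequence converges to 0. -/
open Filter Set

/-- Under strong vanishing pivotality, every equilibrium sequence converges to 0. -/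
theorem stmt_1
    (p : ℝ → ℝ → ℝ) (sA sB : ℝ → ℝ)
    (hpmono1 : ∀ m : ℝ, Antitone (fun n => p n m))
    (hpmono2 : ∀ n : ℝ, Antitone (fun m => p n m))
    (hsvp : ∀ m : ℝ, 0 ≤ m → Tendsto (fun n => p n m) atTop (nhds 0))
    (hsAc : ContinuousOn sA (Icc 0 1)) (hsBc : ContinuousOn sB (Icc 0 1))
    (hsAm : MonotoneOn sA (Icc 0 1)) (hsBm : MonotoneOn sB (Icc 0 1))
    (hsum : sA 1 + sB 1 = 1)
    (hs0 : 0 < sA 0 + sB 0)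
    (c : ℕ → ℝ) (hc : ∀ N, c N ∈ Icc (0:ℝ) 1)
    (heq : ∀ N : ℕ, c N = p ((sA (c N) + sB (c N)) * N)
      (|sA (c N) - sB (c N)| / (sA (c N) + sB (c N)))) :
    ∀ δ > 0, ∀ᶠ N : ℕ in atTop, c N < δ := by
  intro δ hδ
  -- key bound: c N ≤ p ((sA 0 + sB 0) * N) 0
  have hkey : ∀ N : ℕ, c N ≤ p ((sA 0 + sB 0) * N) 0 := by
    intro N
    have h0 : (0:ℝ) ∈ Icc (0:ℝ) 1 := ⟨le_rfl, zero_le_one⟩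
    have hsum_le : sA 0 + sB 0 ≤ sA (c N) + sB (c N) :=
      add_le_add (hsAm h0 (hc N) (hc N).1) (hsBm h0 (hc N) (hc N).1)
    have hden : 0 < sA (c N) + sB (c N) := lt_of_lt_of_le hs0 hsum_le
    have hm : 0 ≤ |sA (c N) - sB (c N)| / (sA (c N) + sB (c N)) :=
      div_nonneg (abs_nonneg _) hden.le
    have h1 : p ((sA (c N) + sB (c N)) * N)
        (|sA (c N) - sB (c N)| / (sA (c N) + sB (c N)))
        ≤ p ((sA (c N) + sB (c N)) * N) 0 := hpmono2 _ hm
    have h2 : p ((sA (c N) + sB (c N)) * N) 0 ≤ p ((sA 0 + sB 0) * N) 0 :=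
      hpmono1 0 (mul_le_mul_of_nonneg_right hsum_le (Nat.cast_nonneg N))
    calc c N = _ := heq N
      _ ≤ _ := h1
      _ ≤ _ := h2
  have htend : Tendsto (fun N : ℕ => p ((sA 0 + sB 0) * N) 0) atTop (nhds 0) :=
    (hsvp 0 le_rfl).comp
      (Tendsto.const_mul_atTop hs0 tendsto_natCast_atTop_atTop)
  have := (htend.eventually (eventually_lt_nhds hδ))
  filter_upwards [this] with N hN
  exact lt_of_le_of_lt (hkey N) hN
end

section
/- Let p be a PPM that is q-tie-sensitive (p(n,0) ≥ q for all n) and has weakly vanishing pivotality (lim_{n→∞} p(n,m) = 0 for all m > 0). Let c* ∈ (0,1) be a pivot point (s_A(c*) = s_B(c*) > 0) with c* < q, and suppose there is t > 0 such that s_A(c) > s_B(c) for all c ∈ (c*, c*+t). Then for every δ > 0 there exist N_δ and an equilibrium c_δ ∈ (c*, c* + δ) of the election (I, N_δ), i.e., c_δ = p(n(c_δ, N_δ), m(c_δ)). In particular, the issue has a right equilibrium sequence with limit c*. -/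
open Filter Set

/-- A tie-sensitive PPM with weakly vanishing pivotality admits equilibria arbitrarily
close (from the right) to any pivot point below q: a right equilibrium sequence. -/
theorem stmt_3
    (p : ℝ → ℝ → ℝ) (sA sB : ℝ → ℝ) (q cstar t : ℝ)
    (hp01 : ∀ n m : ℝ, p n m ∈ Icc (0:ℝ) 1)
    (hpcont : Continuous fun nm : ℝ × ℝ => p nm.1 nm.2)
    (hpmono1 : ∀ m : ℝ, Antitone (fun n => p n m))
    (hpmono2 : ∀ n : ℝ, Antitone (fun m => p n m))
    (htie : ∀ n : ℝ, q ≤ p n 0)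
    (hwvp : ∀ m : ℝ, 0 < m → Tendsto (fun n => p n m) atTop (nhds 0))
    (hsAc : ContinuousOn sA (Icc 0 1)) (hsBc : ContinuousOn sB (Icc 0 1))
    (hsAm : MonotoneOn sA (Icc 0 1)) (hsBm : MonotoneOn sB (Icc 0 1))
    (hsum : sA 1 + sB 1 = 1)
    (hcs : cstar ∈ Ioo (0:ℝ) 1) (hcq : cstar < q)
    (hpiv : sA cstar = sB cstar) (hpos : 0 < sA cstar)
    (ht : 0 < t)
    (hcmp : ∀ c ∈ Ioo cstar (cstar + t), sB c < sA c) :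
    ∀ δ > 0, ∃ (N : ℕ) (c : ℝ), c ∈ Ioo cstar (cstar + δ) ∧
      c = p ((sA c + sB c) * N) (|sA c - sB c| / (sA c + sB c)) := by
  intro δ hδ
  obtain ⟨hc0, hc1⟩ := hcs
  set d := min (min t δ) (min (q - cstar) (1 - cstar)) / 2 with hd
  have hminpos : 0 < min (min t δ) (min (q - cstar) (1 - cstar)) := by
    simp only [lt_min_iff]
    exact ⟨⟨ht, hδ⟩, ⟨sub_pos.2 hcq, sub_pos.2 hc1⟩⟩
  have hd0 : 0 < d := div_pos hminpos two_pos
  have hdlt : d < min (min t δ) (min (q - cstar) (1 - cstar)) := half_lt_self hminpos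
  have hdt : d < t := lt_of_lt_of_le hdlt (le_trans (min_le_left _ _) (min_le_left _ _))
  have hdδ : d < δ := lt_of_lt_of_le hdlt (le_trans (min_le_left _ _) (min_le_right _ _))
  have hdq : d < q - cstar := lt_of_lt_of_le hdlt (le_trans (min_le_right _ _) (min_le_left _ _))
  have hd1 : d < 1 - cstar := lt_of_lt_of_le hdlt (le_trans (min_le_right _ _) (min_le_right _ _))
  set c₁ := cstar + d with hc₁def
  have hc₁1 : c₁ < 1 := by simp only [hc₁def]; linarith
  have hc₁cs : cstar < c₁ := by simp only [hc₁def]; linarith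
  have hsub : Icc cstar c₁ ⊆ Icc (0:ℝ) 1 :=
    fun x hx => ⟨le_trans hc0.le hx.1, le_trans hx.2 hc₁1.le⟩
  have hmemcs : cstar ∈ Icc (0:ℝ) 1 := ⟨hc0.le, hc1.le⟩
  have hAx : ∀ x ∈ Icc cstar c₁, 0 < sA x := fun x hx =>
    lt_of_lt_of_le hpos (hsAm hmemcs (hsub hx) hx.1)
  have hBx : ∀ x ∈ Icc cstar c₁, 0 < sB x := fun x hx =>
    lt_of_lt_of_le (hpiv ▸ hpos) (hsBm hmemcs (hsub hx) hx.1)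
  have hSx : ∀ x ∈ Icc cstar c₁, 0 < sA x + sB x := fun x hx =>
    add_pos (hAx x hx) (hBx x hx)
  have hc₁mem : c₁ ∈ Icc cstar c₁ := ⟨hc₁cs.le, le_refl _⟩
  have hBA : sB c₁ < sA c₁ := hcmp c₁ ⟨hc₁cs, by simp only [hc₁def]; linarith⟩
  have hm : 0 < (sA c₁ - sB c₁) / (sA c₁ + sB c₁) :=
    div_pos (sub_pos.2 hBA) (hSx _ hc₁mem)
  have htend : Tendsto
      (fun N : ℕ => p ((sA c₁ + sB c₁) * N) ((sA c₁ - sB c₁) / (sA c₁ + sB c₁)))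
      atTop (nhds 0) := by
    exact (hwvp _ hm).comp
      (Tendsto.const_mul_atTop (hSx _ hc₁mem) tendsto_natCast_atTop_atTop)
  have hc₁0 : 0 < c₁ := lt_trans hc0 hc₁cs
  obtain ⟨N, hN⟩ := (htend.eventually_lt_const hc₁0).exists
  set f : ℝ → ℝ := fun x => p ((sA x + sB x) * N) (|sA x - sB x| / (sA x + sB x)) with hf
  have hpair : ContinuousOn
      (fun x : ℝ => (((sA x + sB x) * (N:ℝ)), |sA x - sB x| / (sA x + sB x)))
      (Icc cstar c₁) := by
    apply ContinuousOn.prodMk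
    · exact ((hsAc.mono hsub).add (hsBc.mono hsub)).mul continuousOn_const
    · exact ((hsAc.mono hsub).sub (hsBc.mono hsub)).abs.div
        ((hsAc.mono hsub).add (hsBc.mono hsub)) (fun x hx => (hSx x hx).ne')
  have hfc : ContinuousOn f (Icc cstar c₁) := hpcont.comp_continuousOn hpair
  have hgc : ContinuousOn (fun x => f x - x) (Icc cstar c₁) := hfc.sub continuousOn_id
  have hgcs : 0 < f cstar - cstar := by
    have hz : |sA cstar - sB cstar| / (sA cstar + sB cstar) = 0 := by
      rw [hpiv]; simp
    have hq := htie ((sA cstar + sB cstar) * N)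
    simp only [hf, hz]
    linarith
  have hgc₁ : f c₁ - c₁ < 0 := by
    have habs : |sA c₁ - sB c₁| = sA c₁ - sB c₁ := abs_of_pos (sub_pos.2 hBA)
    simp only [hf, habs]
    linarith [hN]
  obtain ⟨c, hcIoo, hc⟩ := intermediate_value_Ioo' hc₁cs.le hgc ⟨hgc₁, hgcs⟩
  refine ⟨N, c, ⟨hcIoo.1, lt_of_lt_of_le hcIoo.2 (by simp only [hc₁def]; linarith)⟩, ?_⟩
  have hc' : f c - c = 0 := hc
  have : f c = c := by linarith
  exact this.symm
end

section
/- Let p(n,m) = min(q, m^(−α) n^(−β)) be the Polynomial PPM and let (c_N) be a sequence of equilibria with c_N > c* converging to a pivot point c* ∈ (0, q), where s_A, s_B have bounded first and second derivatives near c* and m'(c*) > 0, n'(c*) > 0. Then there exist constants 0 < K₁ ≤ K₂ and N₀ such that for all N ≥ N₀: K₁·N^(−β/α) ≤ c_N − c* ≤ K₂·N^(−β/α). -/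
open Filter Set

private lemma rpow_calc_aux (a b Nr α β : ℝ) (ha : 0 < a) (hb : 0 < b) (hN : 0 < Nr) :
    ((a * Nr) ^ (-β) / b) ^ α⁻¹ = (a ^ (-(β / α)) * b ^ (-α⁻¹)) * Nr ^ (-(β / α)) := by
  rw [Real.mul_rpow ha.le hN.le, Real.div_rpow (by positivity) hb.le,
    Real.mul_rpow (by positivity) (by positivity), ← Real.rpow_mul ha.le,
    ← Real.rpow_mul hN.le, Real.rpow_neg hb.le]
  rw [show -β * α⁻¹ = -(β / α) by rw [neg_mul, div_eq_mul_inv]]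
  ring

set_option maxHeartbeats 1000000 in
/-- Rate of convergence of equilibria for the Polynomial PPM: any right equilibrium
sequence converging to a pivot point c* < q satisfies c_N − c* = Θ(N^(−β/α)). -/
theorem stmt_13 (q α β : ℝ) (hq : 0 < q) (hq1 : q ≤ 1) (hα : 0 < α) (hβ : 0 < β)
    (sA sB : ℝ → ℝ) (cstar : ℝ)
    (hcs : cstar ∈ Ioo (0:ℝ) 1) (hcq : cstar < q)
    (hpiv : sA cstar = sB cstar) (hpos : 0 < sA cstar)
    (η : ℝ) (hη : 0 < η)
    (hC2A : ContDiffOn ℝ 2 sA (Ioo (cstar - η) (cstar + η)))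
    (hC2B : ContDiffOn ℝ 2 sB (Ioo (cstar - η) (cstar + η)))
    (mstar sder : ℝ)
    (hm' : HasDerivWithinAt (fun c => |sA c - sB c| / (sA c + sB c)) mstar
      (Ici cstar) cstar)
    (hmpos : 0 < mstar)
    (hn' : HasDerivWithinAt (fun c => sA c + sB c) sder (Ici cstar) cstar)
    (hspos : 0 < sder)
    (c : ℕ → ℝ) (hgt : ∀ N, cstar < c N) (hlim : Tendsto c atTop (nhds cstar))
    (heq : ∀ N : ℕ, 1 ≤ N → c N =
      min q ((|sA (c N) - sB (c N)| / (sA (c N) + sB (c N))) ^ (-α) *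
        ((sA (c N) + sB (c N)) * N) ^ (-β))) :
    ∃ (K₁ K₂ : ℝ) (N₀ : ℕ), 0 < K₁ ∧ K₁ ≤ K₂ ∧ ∀ N ≥ N₀,
      K₁ * (N : ℝ) ^ (-(β / α)) ≤ c N - cstar ∧
      c N - cstar ≤ K₂ * (N : ℝ) ^ (-(β / α)) := by
  obtain ⟨hcs0, hcs1⟩ := hcs
  set m : ℝ → ℝ := fun cc => |sA cc - sB cc| / (sA cc + sB cc) with hm_def
  set n : ℝ → ℝ := fun cc => sA cc + sB cc with hn_def
  set s0 : ℝ := sA cstar + sB cstar with hs0_def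
  have hs0 : 0 < s0 := by rw [hs0_def, ← hpiv]; linarith
  have hm0 : m cstar = 0 := by simp [hm_def, hpiv]
  have hmem : ∀ N, c N ∈ Ici cstar \ {cstar} :=
    fun N => ⟨(hgt N).le, by simp [(hgt N).ne']⟩
  have hlim2 : Tendsto c atTop (nhdsWithin cstar (Ici cstar)) := by
    rw [tendsto_nhdsWithin_iff]
    exact ⟨hlim, Eventually.of_forall fun N => (hgt N).le⟩
  have hlim' : Tendsto c atTop (nhdsWithin cstar (Ici cstar \ {cstar})) := by
    rw [tendsto_nhdsWithin_iff]
    exact ⟨hlim, Eventually.of_forall hmem⟩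
  have hslope : Tendsto (fun N => slope m cstar (c N)) atTop (nhds mstar) :=
    (hasDerivWithinAt_iff_tendsto_slope.mp hm').comp hlim'
  have hEslope : ∀ᶠ N in atTop, slope m cstar (c N) ∈ Ioo (mstar / 2) (2 * mstar) :=
    hslope (Ioo_mem_nhds (by linarith) (by linarith))
  have hncont : Tendsto (fun N => n (c N)) atTop (nhds s0) :=
    Tendsto.comp (hn'.continuousWithinAt : Tendsto n (nhdsWithin cstar (Ici cstar)) (nhds s0)) hlim2
  have hEn : ∀ᶠ N in atTop, n (c N) ∈ Ioo (s0 / 2) (2 * s0) :=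
    hncont (Ioo_mem_nhds (by linarith) (by linarith))
  have hEq : ∀ᶠ N in atTop, c N < q := hlim (Iio_mem_nhds hcq)
  have hEc : ∀ᶠ N in atTop, c N < 2 * cstar := hlim (Iio_mem_nhds (by linarith))
  have hEN : ∀ᶠ N : ℕ in atTop, 1 ≤ N := eventually_ge_atTop 1
  obtain ⟨N₀, hN₀⟩ := (((hEslope.and hEn).and (hEq.and hEc)).and hEN).exists_forall_of_atTop
  set Clow : ℝ := (2 * s0) ^ (-(β / α)) * (2 * cstar) ^ (-α⁻¹) with hClow_def
  set Cup : ℝ := (s0 / 2) ^ (-(β / α)) * cstar ^ (-α⁻¹) with hCup_def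
  have hClow : 0 < Clow := by
    apply mul_pos <;> exact Real.rpow_pos_of_pos (by linarith) _
  have hCup : 0 < Cup := by
    apply mul_pos <;> exact Real.rpow_pos_of_pos (by linarith) _
  refine ⟨Clow / (2 * mstar), max (Clow / (2 * mstar)) (2 * Cup / mstar), N₀,
    by positivity, le_max_left _ _, ?_⟩
  intro N hN
  obtain ⟨⟨⟨⟨hsl1, hsl2⟩, ⟨hn1, hn2⟩⟩, hxq, hx2c⟩, hN1⟩ := hN₀ N hN
  set x : ℝ := c N with hx_def
  have hε : 0 < x - cstar := by have := hgt N; linarith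
  have hxpos : 0 < x := lt_trans hcs0 (hgt N)
  have hNpos : (0 : ℝ) < (N : ℝ) := by exact_mod_cast hN1
  -- slope gives bounds on m x
  have hslope_eq : slope m cstar x = m x / (x - cstar) := by
    rw [slope_def_field, hm0, sub_zero, div_eq_div_iff hε.ne' hε.ne']
  have hmx_lb : mstar / 2 * (x - cstar) < m x := by
    have : mstar / 2 < m x / (x - cstar) := by rw [← hslope_eq]; exact hsl1
    calc mstar / 2 * (x - cstar) < m x / (x - cstar) * (x - cstar) := by
          exact mul_lt_mul_of_pos_right this hε
      _ = m x := div_mul_cancel₀ _ hε.ne'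
  have hmx_ub : m x < 2 * mstar * (x - cstar) := by
    have : m x / (x - cstar) < 2 * mstar := by rw [← hslope_eq]; exact hsl2
    calc m x = m x / (x - cstar) * (x - cstar) := (div_mul_cancel₀ _ hε.ne').symm
      _ < 2 * mstar * (x - cstar) := mul_lt_mul_of_pos_right this hε
  have hmxpos : 0 < m x := lt_trans (by positivity) hmx_lb
  have hnxpos : 0 < n x := lt_trans (by linarith) hn1
  -- equilibrium equation without the min
  have hXeq : x = m x ^ (-α) * (n x * N) ^ (-β) := by
    have h := heq N hN1
    rcases min_cases q (m x ^ (-α) * (n x * (N : ℝ)) ^ (-β)) with ⟨h1, _⟩ | ⟨h1, _⟩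
    · rw [h1] at h; exact absurd h (by intro hh; rw [← hx_def] at hh; linarith)
    · rw [h1] at h; exact h
  set T : ℝ := (n x * N) ^ (-β) with hT_def
  have hTpos : 0 < T := Real.rpow_pos_of_pos (by positivity) _
  have hmα : m x ^ α = T / x := by
    have h1 : m x ^ α * x = T := by
      nth_rewrite 2 [hXeq]
      rw [← mul_assoc, ← Real.rpow_add hmxpos]
      simp
    field_simp [hxpos.ne'] at h1 ⊢
    linarith [h1]
  have hmx_eq : m x = (T / x) ^ α⁻¹ := by
    rw [← hmα, Real.rpow_rpow_inv hmxpos.le hα.ne']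
  -- bounds on T
  have hT_ub : T ≤ (s0 / 2 * N) ^ (-β) :=
    Real.rpow_le_rpow_of_nonpos (by positivity) (by nlinarith) (by linarith)
  have hT_lb : (2 * s0 * N) ^ (-β) ≤ T :=
    Real.rpow_le_rpow_of_nonpos (by positivity) (by nlinarith) (by linarith)
  -- upper bound on m x
  have hdiv_ub : T / x ≤ (s0 / 2 * N) ^ (-β) / cstar :=
    div_le_div₀ (by positivity) hT_ub hcs0 (hgt N).le
  have hdiv_lb : (2 * s0 * N) ^ (-β) / (2 * cstar) ≤ T / x :=
    div_le_div₀ hTpos.le hT_lb hxpos (by linarith)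
  have hmx_ub2 : m x ≤ Cup * (N : ℝ) ^ (-(β / α)) := by
    rw [hmx_eq, ← rpow_calc_aux (s0 / 2) cstar (N : ℝ) α β (by linarith) hcs0 hNpos]
    exact Real.rpow_le_rpow (by positivity) hdiv_ub (by positivity)
  have hmx_lb2 : Clow * (N : ℝ) ^ (-(β / α)) ≤ m x := by
    rw [hmx_eq, ← rpow_calc_aux (2 * s0) (2 * cstar) (N : ℝ) α β (by linarith)
      (by linarith) hNpos]
    exact Real.rpow_le_rpow (by positivity) hdiv_lb (by positivity)
  constructor
  · rw [div_mul_eq_mul_div, div_le_iff₀ (by linarith)]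
    nlinarith
  · have h1 : x - cstar ≤ 2 * Cup / mstar * (N : ℝ) ^ (-(β / α)) := by
      rw [div_mul_eq_mul_div, le_div_iff₀ hmpos]
      nlinarith
    refine le_trans h1 ?_
    exact mul_le_mul_of_nonneg_right (le_max_right _ _) (by positivity)
end
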